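/- arXiv:1802.06671 — 7 statements merged into one kernel-verified Lean document; each statement's English description precedes it below -/
import Mathlib

section
/- For every n ≥ 1 and every 1 ≤ k ≤ ⌊(n+1)/2⌋, the coefficient of x^{n−(2k−1)} in P_n vanishes; in particular a(n, n−1) = 0, so P_n contains only powers of x of the same parity as n. -/
open Polynomial

/-- The Sheffer-type polynomials `P n = R^n 1` where `(Rf)(x) = x f(x) - f'(x) - x f''(x)`. -/
noncomputable def shefferP : ℕ → Polynomial ℝ
  | 0 => 1
  | n + 1 =>
      X * shefferP n - derivative (shefferP n) - X * derivative (derivative (shefferP n))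

lemma shefferP_parity (n : ℕ) : ∀ i : ℕ, i % 2 ≠ n % 2 → (shefferP n).coeff i = 0 := by
  induction n with
  | zero =>
    intro i hi
    simp only [shefferP, coeff_one]
    have : i ≠ 0 := by omega
    simp [this]
  | succ n ih =>
    intro i hi
    have hrec : shefferP (n + 1)
        = X * shefferP n - derivative (shefferP n)
          - X * derivative (derivative (shefferP n)) := rfl
    rw [hrec, coeff_sub, coeff_sub, coeff_derivative]
    cases i with
    | zero =>
      rw [mul_coeff_zero, mul_coeff_zero, coeff_X_zero, zero_mul, zero_mul]
      have h1 : (shefferP n).coeff (0 + 1) = 0 := ih _ (by omega)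
      rw [h1]
      ring
    | succ j =>
      rw [coeff_X_mul, coeff_X_mul, coeff_derivative, coeff_derivative]
      have h1 : (shefferP n).coeff j = 0 := ih _ (by omega)
      have h2 : (shefferP n).coeff (j + 1 + 1) = 0 := ih _ (by omega)
      have h3 : (shefferP n).coeff (j + 1 + 1) = 0 := h2
      rw [h1, h2]
      ring

/-- Coefficients of x^(n-(2k-1)) in P_n vanish, for 1 ≤ k ≤ ⌊(n+1)/2⌋. -/
theorem shefferP_odd_gap_coeff_zero (n k : ℕ) (hn : 1 ≤ n)
    (hk1 : 1 ≤ k) (hk2 : k ≤ (n + 1) / 2) :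
    (shefferP n).coeff (n - (2 * k - 1)) = 0 := by
  apply shefferP_parity
  omega
end

section
/- For every 0 < k with n − 2k ≥ 0, the coefficient a(n, n−2k) of x^{n−2k} in P_n equals (−1)^k Σ_{i_1=1}^{n−2k+1} i_1^2 Σ_{i_2=1}^{i_1+1} i_2^2 ⋯ Σ_{i_k=1}^{i_{k−1}+1} i_k^2. -/
open Polynomial

/-- Nested sum S k m = Σ_{i₁=1}^{m} i₁² Σ_{i₂=1}^{i₁+1} i₂² ⋯ Σ_{i_k=1}^{i_{k-1}+1} i_k². -/
noncomputable def nestedSquareSum : ℕ → ℕ → ℝ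
  | 0, _ => 1
  | k + 1, m => ∑ i ∈ Finset.Icc 1 m, (i : ℝ) ^ 2 * nestedSquareSum k (i + 1)

/-- Coefficient recursion for shefferP. -/
noncomputable def cAux : ℕ → ℕ → ℝ
  | 0, j => if j = 0 then 1 else 0
  | n + 1, 0 => - cAux n 1
  | n + 1, j + 1 => cAux n j - ((j : ℝ) + 2) ^ 2 * cAux n (j + 2)

lemma cAux_eq_zero_of_lt : ∀ n j, n < j → cAux n j = 0 := by
  intro n
  induction n with
  | zero => intro j hj; simp only [cAux]; rw [if_neg (by omega)]
  | succ n ih =>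
    intro j hj
    match j, hj with
    | j + 1, hj =>
      simp only [cAux]
      rw [ih j (by omega), ih (j + 2) (by omega)]
      ring

lemma nestedSquareSum_succ_top (k m : ℕ) :
    nestedSquareSum (k + 1) (m + 1) =
      nestedSquareSum (k + 1) m + ((m : ℝ) + 1) ^ 2 * nestedSquareSum k (m + 2) := by
  simp only [nestedSquareSum]
  rw [Finset.sum_Icc_succ_top (by omega : 1 ≤ m + 1)]
  norm_num

lemma cAux_formula : ∀ n k j, n = 2 * k + j →
    cAux n j = (-1 : ℝ) ^ k * nestedSquareSum k (j + 1) := by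
  intro n
  induction n with
  | zero =>
    intro k j h
    obtain ⟨rfl, rfl⟩ : k = 0 ∧ j = 0 := by omega
    simp [cAux, nestedSquareSum]
  | succ n ih =>
    intro k j h
    match j with
    | 0 =>
      obtain ⟨k', rfl⟩ : ∃ k', k = k' + 1 := ⟨k - 1, by omega⟩
      simp only [cAux]
      rw [ih k' 1 (by omega)]
      have : nestedSquareSum (k' + 1) 1 = nestedSquareSum k' 2 := by
        simp [nestedSquareSum]
      rw [this]
      ring
    | j + 1 =>
      simp only [cAux]
      match k with
      | 0 =>
        rw [ih 0 j (by omega), cAux_eq_zero_of_lt n (j + 2) (by omega)]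
        simp [nestedSquareSum]
      | k + 1 =>
        rw [ih (k + 1) j (by omega), ih k (j + 2) (by omega)]
        rw [nestedSquareSum_succ_top k (j + 1)]
        push_cast
        ring

lemma shefferP_coeff : ∀ n j, (shefferP n).coeff j = cAux n j := by
  intro n
  induction n with
  | zero => intro j; simp only [shefferP, cAux, coeff_one]
  | succ n ih =>
    intro j
    simp only [shefferP, coeff_sub]
    match j with
    | 0 =>
      simp only [cAux, mul_coeff_zero, coeff_X_zero, zero_mul, coeff_derivative, ih]
      push_cast; ring
    | j + 1 =>
      simp only [coeff_X_mul, coeff_derivative, ih, cAux]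
      push_cast
      ring

/-- a(n, n-2k) = (-1)^k Σ_{i₁=1}^{n-2k+1} i₁² Σ_{i₂=1}^{i₁+1} i₂² ⋯ Σ_{i_k=1}^{i_{k-1}+1} i_k². -/
theorem shefferP_coeff_formula (n k : ℕ) (hk : 0 < k) (hkn : 2 * k ≤ n) :
    (shefferP n).coeff (n - 2 * k) = (-1 : ℝ) ^ k * nestedSquareSum k (n - 2 * k + 1) := by
  rw [shefferP_coeff, cAux_formula n k (n - 2 * k) (by omega)]
end

section
/- Let N_1, N_2 be independent standard Gaussian random variables and F = N_1·N_2. Then for every polynomial f, E[F f(F) − f'(F) − F f''(F)] = 0; equivalently E[(Rf)(F)] = 0. In particular E[P_n(F)] = 0 for all n ≥ 1. -/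
/-!
Let `m n = E[N ^ n]` for `N` standard Gaussian. By independence `E[F ^ n] = (m n) ^ 2`, and Gaussian
integration by parts gives `m (k + 2) = (k + 1) * m k`, hence `E[F ^ (k + 2)] = (k + 1) ^ 2 * E[F ^ k]`.
Since `R 1 = X` and `R X ^ (k + 1) = X ^ (k + 2) - (k + 1) ^ 2 * X ^ k`, these relations together with
`E[F] = 0` are exactly `E[(R X ^ n)(F)] = 0`, and linearity extends this to every polynomial.
Finally `P (n + 1) = R (P n)`.
-/

open Polynomial MeasureTheory ProbabilityTheory

/-- The joint law of two independent standard Gaussians. -/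
noncomputable def gauss2 : Measure (ℝ × ℝ) :=
  (gaussianReal 0 1).prod (gaussianReal 0 1)

open Real
open scoped NNReal

namespace ProbabilityTheory

variable {μ : ℝ} {v : ℝ≥0}

lemma integrable_pow_gaussianReal (n : ℕ) : Integrable (fun x : ℝ ↦ x ^ n) (gaussianReal μ v) := by
  rcases eq_or_ne n 0 with rfl | hn
  · simp
  refine ((memLp_id_gaussianReal n).integrable_norm_pow hn).mono' (by fun_prop) ?_
  filter_upwards with x
  simp [norm_pow]

lemma hasDerivAt_gaussianPDFReal (μ : ℝ) (v : ℝ≥0) (x : ℝ) :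
    HasDerivAt (gaussianPDFReal μ v) (-(x - μ) / v * gaussianPDFReal μ v x) x := by
  rw [gaussianPDFReal_def]
  refine ((((hasDerivAt_id' x).sub_const μ).pow 2).neg.div_const (2 * (v : ℝ))).exp.const_mul
    (√(2 * π * v))⁻¹ |>.congr_deriv ?_
  rcases eq_or_ne (v : ℝ) 0 with hv | hv
  · simp [hv]
  · simp only [Pi.pow_apply, Pi.neg_apply]
    field_simp
    ring

lemma integrable_gaussianReal_iff (hv : v ≠ 0) {g : ℝ → ℝ} :
    Integrable g (gaussianReal μ v) ↔ Integrable (fun x ↦ gaussianPDFReal μ v x * g x) := by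
  rw [gaussianReal_of_var_ne_zero _ hv,
    integrable_withDensity_iff_integrable_smul' (measurable_gaussianPDF μ v)
      (ae_of_all _ fun _ ↦ gaussianPDF_lt_top)]
  simp

-- Gaussian integration by parts (Stein's lemma).
theorem integral_sub_mul_gaussianReal {g g' : ℝ → ℝ} (hv : v ≠ 0)
    (hg : ∀ x, HasDerivAt g (g' x) x) (hg_int : Integrable g (gaussianReal μ v))
    (hxg_int : Integrable (fun x ↦ (x - μ) * g x) (gaussianReal μ v))
    (hg'_int : Integrable g' (gaussianReal μ v)) :
    ∫ x, (x - μ) * g x ∂gaussianReal μ v = v * ∫ x, g' x ∂gaussianReal μ v := by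
  set φ := gaussianPDFReal μ v
  rw [integrable_gaussianReal_iff hv] at hg_int hxg_int hg'_int
  have hderiv : ∀ x, HasDerivAt (fun x ↦ φ x * g x)
      (φ x * g' x - (v : ℝ)⁻¹ * (φ x * ((x - μ) * g x))) x := by
    intro x
    refine ((hasDerivAt_gaussianPDFReal μ v x).mul (hg x)).congr_deriv ?_
    ring
  have hzero := integral_eq_zero_of_hasDerivAt_of_integrable hderiv
    (hg'_int.sub (hxg_int.const_mul _)) hg_int
  rw [integral_sub hg'_int (hxg_int.const_mul _), integral_const_mul, sub_eq_zero] at hzero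
  simp only [integral_gaussianReal_eq_integral_smul hv, smul_eq_mul]
  rw [hzero, ← mul_assoc, mul_inv_cancel₀ (by exact_mod_cast hv), one_mul]

lemma integral_pow_add_two_gaussianReal (v : ℝ≥0) (k : ℕ) :
    ∫ x, x ^ (k + 2) ∂gaussianReal 0 v = (k + 1) * v * ∫ x, x ^ k ∂gaussianReal 0 v := by
  rcases eq_or_ne v 0 with rfl | hv
  · simp
  have hderiv (x : ℝ) : HasDerivAt (· ^ (k + 1)) ((k + 1 : ℝ) * x ^ k) x := by
    simpa using hasDerivAt_pow (k + 1) x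
  have hint := integrable_pow_gaussianReal (μ := 0) (v := v) (k + 2)
  calc ∫ x, x ^ (k + 2) ∂gaussianReal 0 v = ∫ x, (x - 0) * x ^ (k + 1) ∂gaussianReal 0 v := by
        simp only [sub_zero, ← pow_succ']
    _ = v * ∫ x, (k + 1 : ℝ) * x ^ k ∂gaussianReal 0 v :=
        integral_sub_mul_gaussianReal hv hderiv (integrable_pow_gaussianReal _)
          (by simpa [← pow_succ'] using hint) ((integrable_pow_gaussianReal k).const_mul _)
    _ = (k + 1) * v * ∫ x, x ^ k ∂gaussianReal 0 v := by
        rw [integral_const_mul]; ring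

end ProbabilityTheory

section SteinOperator

variable {α : Type*} [MeasurableSpace α] {ν : Measure α} {F : α → ℝ}

lemma integrable_eval_of_integrable_pow (hF : ∀ n : ℕ, Integrable (fun a ↦ F a ^ n) ν)
    (g : ℝ[X]) : Integrable (fun a ↦ g.eval (F a)) ν := by
  simp_rw [eval_eq_sum_range]
  exact integrable_finsetSum _ fun i _ ↦ (hF i).const_mul _

/-- The operator `R` on polynomials. -/
noncomputable def steinOp : ℝ[X] →ₗ[ℝ] ℝ[X] :=
  LinearMap.mulLeft ℝ X - derivative - LinearMap.mulLeft ℝ X ∘ₗ derivative ∘ₗ derivative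

@[simp]
lemma eval_steinOp (f : ℝ[X]) (z : ℝ) :
    (steinOp f).eval z =
      z * f.eval z - (derivative f).eval z - z * (derivative (derivative f)).eval z := by
  simp [steinOp]

lemma steinOp_one : steinOp 1 = X := by
  simp [steinOp]

lemma steinOp_X_pow_succ (k : ℕ) :
    steinOp (X ^ (k + 1)) = X ^ (k + 2) - C ((k + 1 : ℝ) ^ 2) * X ^ k := by
  rcases k with _ | k
  · simp [steinOp, sq]
  · simp [steinOp]
    ring

theorem integral_eval_steinOp_eq_zero (hF : ∀ n : ℕ, Integrable (fun a ↦ F a ^ n) ν)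
    (hmean : ∫ a, F a ∂ν = 0)
    (hrec : ∀ k : ℕ, ∫ a, F a ^ (k + 2) ∂ν = (k + 1) ^ 2 * ∫ a, F a ^ k ∂ν) (g : ℝ[X]) :
    ∫ a, (steinOp g).eval (F a) ∂ν = 0 := by
  have hint := integrable_eval_of_integrable_pow hF
  induction g using Polynomial.induction_on' with
  | add p q hp hq =>
    simp only [map_add, eval_add]
    rw [integral_add (hint _) (hint _), hp, hq, add_zero]
  | monomial n a =>
    rw [← C_mul_X_pow_eq_monomial, ← smul_eq_C_mul, map_smul]
    simp only [eval_smul, smul_eq_mul, integral_const_mul]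
    rcases n with _ | k
    · simp [steinOp_one, hmean]
    · simp only [steinOp_X_pow_succ, eval_sub, eval_mul, eval_C, eval_pow, eval_X]
      rw [integral_sub (hF _) ((hF _).const_mul _), integral_const_mul, hrec, sub_self, mul_zero]

end SteinOperator

lemma integral_mul_pow_prod (ν₁ ν₂ : Measure ℝ) [SFinite ν₁] [SFinite ν₂] (n : ℕ) :
    ∫ p, (p.1 * p.2) ^ n ∂(ν₁.prod ν₂) = (∫ x, x ^ n ∂ν₁) * ∫ y, y ^ n ∂ν₂ := by
  simp_rw [mul_pow]
  exact integral_prod_mul _ _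

lemma shefferP_succ (n : ℕ) : shefferP (n + 1) = steinOp (shefferP n) := by
  simp [shefferP, steinOp]

lemma integrable_mul_pow_gauss2 (n : ℕ) :
    Integrable (fun p : ℝ × ℝ ↦ (p.1 * p.2) ^ n) gauss2 := by
  simp_rw [mul_pow]
  exact (integrable_pow_gaussianReal n).mul_prod (integrable_pow_gaussianReal n)

lemma integral_mul_pow_gauss2 (n : ℕ) :
    ∫ p, (p.1 * p.2) ^ n ∂gauss2 = (∫ x, x ^ n ∂gaussianReal 0 1) ^ 2 := by
  rw [gauss2, integral_mul_pow_prod, sq]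

/-- Stein identity for the normal product F = N₁N₂: E[(Rf)(F)] = 0 for every polynomial f;
in particular E[Pₙ(F)] = 0 for n ≥ 1. -/
theorem stein_identity_normal_product :
    (∀ f : Polynomial ℝ,
      ∫ p : ℝ × ℝ,
        (p.1 * p.2 * f.eval (p.1 * p.2) - (derivative f).eval (p.1 * p.2)
          - p.1 * p.2 * (derivative (derivative f)).eval (p.1 * p.2)) ∂gauss2 = 0) ∧
    ∀ n : ℕ, 1 ≤ n → ∫ p : ℝ × ℝ, (shefferP n).eval (p.1 * p.2) ∂gauss2 = 0 := by
  have hmean : ∫ p : ℝ × ℝ, p.1 * p.2 ∂gauss2 = 0 := by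
    simpa [integral_id_gaussianReal] using integral_mul_pow_gauss2 1
  have hrec (k : ℕ) : ∫ p : ℝ × ℝ, (p.1 * p.2) ^ (k + 2) ∂gauss2 =
      (k + 1) ^ 2 * ∫ p : ℝ × ℝ, (p.1 * p.2) ^ k ∂gauss2 := by
    rw [integral_mul_pow_gauss2, integral_mul_pow_gauss2, integral_pow_add_two_gaussianReal]
    push_cast
    ring
  have key := integral_eval_steinOp_eq_zero integrable_mul_pow_gauss2 hmean hrec
  refine ⟨fun f ↦ by simpa using key f, fun n hn ↦ ?_⟩
  obtain ⟨m, rfl⟩ := Nat.exists_eq_add_of_le' hn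
  rw [shefferP_succ]
  exact key _
end

section
/- The density of F = N_1·N_2 (product of independent standard Gaussians) is p(x) = (1/π) K_0(|x|) for x ≠ 0, where K_0 is the modified Bessel function of the second kind of order 0. -/
/-! Disintegrating along the first factor, the product `XY` of independent real variables with
densities `f`, `g` has density `u ↦ ∫ f x · g (u / x) / |x| dx`. For standard Gaussians the
integrand is `(2π)⁻¹ |x|⁻¹ exp (-(x² + u²/x²) / 2)`, even in `x`. On `x > 0` the substitution
`x = √|u| · e^{s/2}` turns `x² + u²/x²` into `2|u| cosh s` and `dx / x` into `ds / 2`, so evenness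
in `s` leaves `π⁻¹ ∫₀^∞ e^{-|u| cosh s} ds = π⁻¹ K₀(|u|)`. -/

open MeasureTheory ProbabilityTheory

/-- Modified Bessel function of the second kind, order 0: K₀(x) = ∫₀^∞ e^{-x cosh t} dt. -/
noncomputable def besselK0 (x : ℝ) : ℝ :=
  ∫ t in Set.Ioi (0 : ℝ), Real.exp (-x * Real.cosh t)

open Real Set
open scoped ENNReal

lemma lintegral_eq_two_mul_setLIntegral_Ioi_of_even {g : ℝ → ℝ≥0∞} (hg : ∀ x, g (-x) = g x) :
    ∫⁻ x, g x = 2 * ∫⁻ x in Ioi 0, g x := by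
  have hIic : ∫⁻ x in Iic 0, g x = ∫⁻ x in Ioi 0, g x := by
    rw [← lintegral_indicator measurableSet_Iic, ← lintegral_neg_eq_self,
      setLIntegral_congr Ioi_ae_eq_Ici, ← lintegral_indicator measurableSet_Ici]
    congr with x
    simp [indicator, hg]
  rw [← setLIntegral_univ, ← Iic_union_Ioi (a := (0 : ℝ)),
    lintegral_union measurableSet_Ioi (Iic_disjoint_Ioi le_rfl), hIic, two_mul]

lemma lintegral_comp_mul_left {h : ℝ → ℝ≥0∞} (hh : Measurable h) {c : ℝ} (hc : c ≠ 0) :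
    ∫⁻ y, h (c * y) = ENNReal.ofReal |c⁻¹| * ∫⁻ u, h u := by
  rw [← lintegral_map hh (measurable_const_mul c), Real.map_volume_mul_left hc,
    lintegral_smul_measure, smul_eq_mul]

lemma setLIntegral_Ioi_eq_lintegral_mul_exp_half {c : ℝ} (hc : 0 < c) (g : ℝ → ℝ≥0∞) :
    ∫⁻ x in Ioi 0, g x = ∫⁻ s, ENNReal.ofReal (c * exp (s / 2) / 2) * g (c * exp (s / 2)) := by
  have himage : (fun s => c * exp (s / 2)) '' univ = Ioi 0 := by
    ext x
    simp only [image_univ, mem_range, mem_Ioi]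
    refine ⟨fun ⟨s, hs⟩ => hs ▸ by positivity, fun hx => ⟨2 * log (x / c), ?_⟩⟩
    rw [mul_div_cancel_left₀ _ two_ne_zero, exp_log (by positivity), mul_div_cancel₀ _ hc.ne']
  have hderiv : ∀ s ∈ univ,
      HasDerivWithinAt (fun s => c * exp (s / 2)) (c * exp (s / 2) / 2) univ s := by
    intro s _
    refine ((((hasDerivAt_id' s).div_const 2).exp.const_mul c).congr_deriv ?_).hasDerivWithinAt
    ring
  have hinj : InjOn (fun s => c * exp (s / 2)) univ := by
    intro s _ t _ h
    simpa [hc.ne'] using h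
  rw [← himage, lintegral_image_eq_lintegral_abs_deriv_mul MeasurableSet.univ hderiv hinj,
    setLIntegral_univ]
  refine lintegral_congr fun s => ?_
  rw [abs_of_pos (by positivity)]

lemma withDensity_preimage_mul_left {g : ℝ → ℝ≥0∞} (hg : Measurable g) {c : ℝ} (hc : c ≠ 0)
    {A : Set ℝ} (hA : MeasurableSet A) :
    volume.withDensity g ((c * ·) ⁻¹' A) = ∫⁻ u in A, ENNReal.ofReal |c⁻¹| * g (c⁻¹ * u) := by
  have hpre : MeasurableSet ((c * ·) ⁻¹' A) := measurable_const_mul c hA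
  have hg' : Measurable fun u => g (c⁻¹ * u) := hg.comp (measurable_const_mul _)
  have hind :
      ((c * ·) ⁻¹' A).indicator g = fun y => A.indicator (fun u => g (c⁻¹ * u)) (c * y) := by
    ext y
    simp only [indicator, inv_mul_cancel_left₀ hc]
    rfl
  rw [withDensity_apply _ hpre, ← lintegral_indicator hpre, hind,
    lintegral_comp_mul_left (hg'.indicator hA) hc, lintegral_indicator hA,
    lintegral_const_mul _ hg']

lemma map_mul_prod_withDensity {f g : ℝ → ℝ≥0∞} (hf : Measurable f) (hg : Measurable g) :
    ((volume.withDensity f).prod (volume.withDensity g)).map (fun p => p.1 * p.2)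
      = volume.withDensity fun u => ∫⁻ x, f x * (ENNReal.ofReal |x⁻¹| * g (x⁻¹ * u)) := by
  have hmul : Measurable fun p : ℝ × ℝ => p.1 * p.2 := measurable_fst.mul measurable_snd
  have hk : Measurable (Function.uncurry fun x u : ℝ =>
      f x * (ENNReal.ofReal |x⁻¹| * g (x⁻¹ * u))) := by
    fun_prop
  ext A hA
  rw [Measure.map_apply hmul hA, Measure.prod_apply (hmul hA),
    lintegral_withDensity_eq_lintegral_mul _ hf (measurable_measure_prodMk_left (hmul hA)),
    withDensity_apply _ hA]
  calc _ = ∫⁻ x, ∫⁻ u in A, f x * (ENNReal.ofReal |x⁻¹| * g (x⁻¹ * u)) := by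
        refine lintegral_congr_ae ?_
        filter_upwards [Measure.ae_ne volume 0] with x hx
        rw [Pi.mul_apply, lintegral_const_mul _ (by fun_prop)]
        exact congrArg _ (withDensity_preimage_mul_left hg hx hA)
    _ = _ := lintegral_lintegral_swap hk.aemeasurable

lemma gaussianPDFReal_mul_gaussianPDFReal (x y : ℝ) :
    gaussianPDFReal 0 1 x * gaussianPDFReal 0 1 y = (2 * π)⁻¹ * exp (-(x ^ 2 + y ^ 2) / 2) := by
  have h2π : (√(2 * π))⁻¹ * (√(2 * π))⁻¹ = (2 * π)⁻¹ := by
    rw [← mul_inv, mul_self_sqrt (by positivity)]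
  simp only [gaussianPDFReal, NNReal.coe_one, mul_one, sub_zero]
  rw [mul_mul_mul_comm, h2π, ← exp_add]
  ring_nf

lemma sq_add_sq_inv_mul_sqrt_abs_mul_exp (u s : ℝ) :
    (√|u| * exp (s / 2)) ^ 2 + ((√|u| * exp (s / 2))⁻¹ * u) ^ 2 = 2 * |u| * cosh s := by
  rcases eq_or_ne u 0 with rfl | hu
  · simp
  have ha : 0 < |u| := abs_pos.mpr hu
  have hexp : exp (s / 2) ^ 2 = exp s := by rw [← exp_nat_mul]; ring_nf
  rw [mul_pow, inv_mul_eq_div, div_pow, mul_pow, sq_sqrt ha.le, hexp, cosh_eq, exp_neg,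
    ← sq_abs u]
  field_simp

lemma integrableOn_exp_neg_mul_cosh {a : ℝ} (ha : 0 < a) :
    IntegrableOn (fun t => exp (-a * cosh t)) (Ioi 0) := by
  refine (exp_neg_integrableOn_Ioi 0 ha).mono' (by fun_prop) ?_
  filter_upwards [ae_restrict_mem measurableSet_Ioi] with t ht
  rw [norm_of_nonneg (exp_pos _).le, exp_le_exp, neg_mul, neg_mul, neg_le_neg_iff]
  have ht_le_cosh : t ≤ cosh t := (self_le_sinh_iff.mpr ht.le).trans (sinh_lt_cosh t).le
  exact mul_le_mul_of_nonneg_left ht_le_cosh ha.le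

lemma ofReal_besselK0 {a : ℝ} (ha : 0 < a) :
    ENNReal.ofReal (besselK0 a) = ∫⁻ t in Ioi 0, ENNReal.ofReal (exp (-a * cosh t)) :=
  ofReal_integral_eq_lintegral_ofReal (integrableOn_exp_neg_mul_cosh ha)
    (.of_forall fun _ => (exp_pos _).le)

lemma lintegral_gaussianPDF_mul_gaussianPDF_inv_mul {u : ℝ} (hu : u ≠ 0) :
    ∫⁻ x, gaussianPDF 0 1 x * (ENNReal.ofReal |x⁻¹| * gaussianPDF 0 1 (x⁻¹ * u))
      = ENNReal.ofReal (1 / π * besselK0 |u|) := by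
  set F : ℝ → ℝ := fun x => (2 * π)⁻¹ * |x⁻¹| * exp (-(x ^ 2 + (x⁻¹ * u) ^ 2) / 2) with hF_def
  have hF : ∀ x, gaussianPDF 0 1 x * (ENNReal.ofReal |x⁻¹| * gaussianPDF 0 1 (x⁻¹ * u))
      = ENNReal.ofReal (F x) := by
    intro x
    rw [gaussianPDF, gaussianPDF, ← ENNReal.ofReal_mul (abs_nonneg _),
      ← ENNReal.ofReal_mul (gaussianPDFReal_nonneg _ _ _), mul_left_comm,
      gaussianPDFReal_mul_gaussianPDFReal, hF_def]
    ring_nf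
  have hF_even : ∀ x, F (-x) = F x := by simp [hF_def]
  have hF_exp : ∀ s,
      ENNReal.ofReal (√|u| * exp (s / 2) / 2) * ENNReal.ofReal (F (√|u| * exp (s / 2)))
        = ENNReal.ofReal (4 * π)⁻¹ * ENNReal.ofReal (exp (-|u| * cosh s)) := by
    intro s
    have hx : 0 < √|u| * exp (s / 2) := by positivity
    rw [← ENNReal.ofReal_mul (by positivity), ← ENNReal.ofReal_mul (by positivity), hF_def]
    dsimp only
    rw [sq_add_sq_inv_mul_sqrt_abs_mul_exp, abs_inv, abs_of_pos hx]
    field_simp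
    ring_nf
  simp_rw [hF]
  rw [lintegral_eq_two_mul_setLIntegral_Ioi_of_even (fun x => by rw [hF_even]),
    setLIntegral_Ioi_eq_lintegral_mul_exp_half (sqrt_pos.mpr (abs_pos.mpr hu))]
  simp_rw [hF_exp]
  rw [lintegral_const_mul' _ _ ENNReal.ofReal_ne_top,
    lintegral_eq_two_mul_setLIntegral_Ioi_of_even (by simp), ← ofReal_besselK0 (abs_pos.mpr hu),
    ← ENNReal.ofReal_ofNat 2, ← ENNReal.ofReal_mul zero_le_two,
    ← ENNReal.ofReal_mul (by positivity), ← ENNReal.ofReal_mul zero_le_two]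
  congr 1
  field_simp
  ring

theorem normal_product_density_general (s : Set ℝ) :
    Measure.map (fun p : ℝ × ℝ => p.1 * p.2) gauss2 s
      = ∫⁻ x in s, ENNReal.ofReal ((1 / Real.pi) * besselK0 |x|) ∂volume := by
  have hpdf : Measurable (gaussianPDF 0 1) := measurable_gaussianPDF 0 1
  have hdensity :
      (fun u => ∫⁻ x, gaussianPDF 0 1 x * (ENNReal.ofReal |x⁻¹| * gaussianPDF 0 1 (x⁻¹ * u)))
        =ᵐ[volume] fun u => ENNReal.ofReal (1 / π * besselK0 |u|) := by
    filter_upwards [Measure.ae_ne volume 0] with u hu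
    exact lintegral_gaussianPDF_mul_gaussianPDF_inv_mul hu
  rw [gauss2, gaussianReal_of_var_ne_zero 0 one_ne_zero, map_mul_prod_withDensity hpdf hpdf,
    withDensity_congr_ae hdensity, withDensity_apply']

/-- The density of the normal product F = N₁N₂ is x ↦ (1/π) K₀(|x|). -/
theorem normal_product_density (s : Set ℝ) (hs : MeasurableSet s) :
    Measure.map (fun p : ℝ × ℝ => p.1 * p.2) gauss2 s
      = ∫⁻ x in s, ENNReal.ofReal ((1 / Real.pi) * besselK0 |x|) ∂volume :=
  normal_product_density_general s
end

section
/- The exponential generating function G(t,x) = Σ_{n≥0} P_n(x) t^n/n! of the polynomials P_n satisfies the PDE ∂_t G = x G − ∂_x G − x ∂_{xx} G, and is given in closed form by G(t,x) = exp(x tanh t)/cosh t for |t| < π/2. -/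
/-! For fixed `x`, `f(z) = exp(x tanh z) / cosh z` is holomorphic on `‖z‖ < π/2`, where `cosh`
has no zeros, so it is the sum of its Taylor series at `0`. Its derivatives have the form
`f⁽ⁿ⁾(z) = Qₙ(x, tanh z) f(z)`, where `Qₙ₊₁ = T Qₙ` for the operator `T` that `∂_z` induces on
prefactors. The operator `R` that `x - ∂ₓ - x ∂ₓ²` induces on prefactors commutes with `T`
(as `∂_z` commutes with `∂ₓ`), and `R 1 = T 1`, so `Qₙ = Rⁿ 1`. At `z = 0`, where `tanh z = 0`,
`R` becomes the recurrence defining `Pₙ`; hence `f⁽ⁿ⁾(0) = Pₙ(x)` and `G = f`. The PDE is then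
a direct computation on the closed form. -/

open Polynomial

/-- The exponential generating function G(t,x) = Σₙ Pₙ(x) tⁿ/n!. -/
noncomputable def shefferG (t x : ℝ) : ℝ :=
  ∑' n : ℕ, (shefferP n).eval x * t ^ n / (Nat.factorial n)

open MvPolynomial

theorem MvPolynomial.pderiv_pderiv_comm {σ R : Type*} [CommSemiring R] (i j : σ)
    (p : MvPolynomial σ R) : pderiv i (pderiv j p) = pderiv j (pderiv i p) := by
  classical
  induction p using MvPolynomial.induction_on' with
  | monomial s a =>
    rcases eq_or_ne i j with rfl | hij
    · rfl
    · simp only [pderiv_monomial, Finsupp.tsub_apply, Finsupp.single_eq_of_ne hij,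
        Finsupp.single_eq_of_ne hij.symm, tsub_zero, tsub_tsub, add_comm]
      rw [mul_right_comm]
  | add p q hp hq => simp only [map_add, hp, hq]

theorem Complex.cosh_ne_zero_of_norm_lt {z : ℂ} (hz : ‖z‖ < Real.pi / 2) :
    Complex.cosh z ≠ 0 := by
  intro h
  obtain ⟨k, hk⟩ := Complex.cos_eq_zero_iff.mp ((Complex.cos_mul_I z).trans h)
  have hk1 : (1 : ℝ) ≤ |2 * (k : ℝ) + 1| := by
    exact_mod_cast Int.one_le_abs (by omega : 2 * k + 1 ≠ 0)
  have hnorm : ‖z‖ = |2 * (k : ℝ) + 1| * (Real.pi / 2) := by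
    rw [← (by simp : ‖z * Complex.I‖ = ‖z‖), hk,
      show (2 * (k : ℂ) + 1) * Real.pi / 2 = ((2 * k + 1) * (Real.pi / 2) : ℝ) by push_cast; ring,
      Complex.norm_real, Real.norm_eq_abs, abs_mul, abs_of_pos Real.pi_div_two_pos]
  nlinarith [Real.pi_pos]

theorem Complex.hasDerivAt_tanh {z : ℂ} (h : Complex.cosh z ≠ 0) :
    HasDerivAt Complex.tanh (1 - Complex.tanh z ^ 2) z := by
  have hd := (Complex.hasDerivAt_sinh z).div (Complex.hasDerivAt_cosh z) h
  rw [show Complex.sinh / Complex.cosh = Complex.tanh from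
    funext fun w => (Complex.tanh_eq_sinh_div_cosh w).symm] at hd
  refine hd.congr_deriv ?_
  rw [Complex.tanh_eq_sinh_div_cosh]
  field_simp

namespace Sheffer

section Prefactor

variable {R : Type*} [CommRing R]

/-- Writing `X 0 = x`, `X 1 = w = tanh z` and `f = exp(x tanh z) / cosh z`, we have
`∂_z (A f) = (derivOp A) f` (as `∂_z w = 1 - w²`) and
`x (A f) - ∂ₓ (A f) - x ∂ₓ² (A f) = (shefferOp A) f` (as `∂ₓ f = w f`). -/
noncomputable def derivOp (A : MvPolynomial (Fin 2) R) : MvPolynomial (Fin 2) R :=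
  (1 - X 1 ^ 2) * pderiv 1 A + (X 0 * (1 - X 1 ^ 2) - X 1) * A

noncomputable def shefferOp (A : MvPolynomial (Fin 2) R) : MvPolynomial (Fin 2) R :=
  (X 0 * (1 - X 1 ^ 2) - X 1) * A - (1 + 2 * X 0 * X 1) * pderiv 0 A
    - X 0 * pderiv 0 (pderiv 0 A)

theorem derivOp_shefferOp_comm (A : MvPolynomial (Fin 2) R) :
    derivOp (shefferOp A) = shefferOp (derivOp A) := by
  have h01 : pderiv 0 (X 1 : MvPolynomial (Fin 2) R) = 0 := pderiv_X_of_ne (by decide)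
  have h10 : pderiv 1 (X 0 : MvPolynomial (Fin 2) R) = 0 := pderiv_X_of_ne (by decide)
  have h2 (i : Fin 2) : pderiv i (2 : MvPolynomial (Fin 2) R) = 0 := by
    rw [← map_ofNat MvPolynomial.C 2, pderiv_C]
  simp only [derivOp, shefferOp, map_sub, map_add, pderiv_mul, pderiv_one, map_zero,
    pderiv_X_self, pderiv_pow, h01, h10, h2, pderiv_pderiv_comm (0 : Fin 2) 1]
  ring

noncomputable def prefactor : ℕ → MvPolynomial (Fin 2) R
  | 0 => 1
  | n + 1 => derivOp (prefactor n)

theorem shefferOp_prefactor (n : ℕ) :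
    shefferOp (prefactor n : MvPolynomial (Fin 2) R) = prefactor (n + 1) := by
  induction n with
  | zero => simp [prefactor, shefferOp, derivOp]
  | succ n ih =>
    show shefferOp (derivOp (prefactor n)) = derivOp (prefactor (n + 1))
    rw [← derivOp_shefferOp_comm, ih]

noncomputable def evalSndZero : MvPolynomial (Fin 2) R →ₐ[R] Polynomial R :=
  aeval ![Polynomial.X, 0]

@[simp]
theorem evalSndZero_X_zero : evalSndZero (X 0 : MvPolynomial (Fin 2) R) = Polynomial.X := by
  simp [evalSndZero]

@[simp]
theorem evalSndZero_X_one : evalSndZero (X 1 : MvPolynomial (Fin 2) R) = 0 := by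
  simp [evalSndZero]

theorem evalSndZero_pderiv_zero (A : MvPolynomial (Fin 2) R) :
    evalSndZero (pderiv 0 A) = Polynomial.derivative (evalSndZero A) := by
  induction A using MvPolynomial.induction_on with
  | C a => simp [evalSndZero]
  | add p q hp hq => simp only [map_add, hp, hq]
  | mul_X p i hp =>
    fin_cases i
    · simp [hp, Polynomial.derivative_mul, mul_comm]
    · simp [hp, pderiv_X_of_ne (show (1 : Fin 2) ≠ 0 by decide)]

theorem evalSndZero_shefferOp (A : MvPolynomial (Fin 2) R) :
    evalSndZero (shefferOp A) = Polynomial.X * evalSndZero A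
      - Polynomial.derivative (evalSndZero A)
      - Polynomial.X * Polynomial.derivative (Polynomial.derivative (evalSndZero A)) := by
  simp [shefferOp, evalSndZero_pderiv_zero]

theorem aeval_evalSndZero {S : Type*} [CommRing S] [Algebra R S] (c : S)
    (A : MvPolynomial (Fin 2) R) : Polynomial.aeval c (evalSndZero A) = aeval ![c, 0] A := by
  rw [← AlgHom.comp_apply]
  congr 1
  ext i
  fin_cases i <;> simp [evalSndZero]

end Prefactor

theorem evalSndZero_prefactor (n : ℕ) : evalSndZero (prefactor n) = shefferP n := by
  induction n with
  | zero => simp [prefactor, shefferP]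
  | succ n ih => rw [← shefferOp_prefactor, evalSndZero_shefferOp, ih, shefferP]

noncomputable def genFun (x z : ℂ) : ℂ := Complex.exp (x * Complex.tanh z) / Complex.cosh z

theorem hasDerivAt_genFun (x : ℂ) {z : ℂ} (h : Complex.cosh z ≠ 0) :
    HasDerivAt (genFun x) ((x * (1 - Complex.tanh z ^ 2) - Complex.tanh z) * genFun x z) z := by
  refine (((Complex.hasDerivAt_tanh h).const_mul x).cexp.div (Complex.hasDerivAt_cosh z) h
    ).congr_deriv ?_
  simp only [genFun, Complex.tanh_eq_sinh_div_cosh]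
  field_simp

theorem hasDerivAt_aeval_comp_snd (c : ℂ) (P : MvPolynomial (Fin 2) ℝ) {u : ℂ → ℂ} {u' z : ℂ}
    (hu : HasDerivAt u u' z) :
    HasDerivAt (fun w => MvPolynomial.aeval ![c, u w] P)
      (MvPolynomial.aeval ![c, u z] (pderiv 1 P) * u') z := by
  induction P using MvPolynomial.induction_on with
  | C a => simpa using hasDerivAt_const z _
  | add p q hp hq =>
    simp only [map_add, add_mul]
    exact hp.add hq
  | mul_X p i hp =>
    have h10 : pderiv 1 (X 0 : MvPolynomial (Fin 2) ℝ) = 0 := pderiv_X_of_ne (by decide)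
    fin_cases i <;>
      simp only [Fin.zero_eta, Fin.mk_one, Fin.isValue, map_mul, MvPolynomial.aeval_X,
        pderiv_mul, pderiv_X_self, h10, mul_zero, mul_one, add_zero, map_add,
        Matrix.cons_val_zero, Matrix.cons_val_one]
    · exact (hp.mul_const c).congr_deriv (by ring)
    · exact (hp.mul hu).congr_deriv (by ring)

theorem iteratedDeriv_genFun (x : ℂ) (n : ℕ) {z : ℂ} (hz : z ∈ Metric.ball 0 (Real.pi / 2)) :
    iteratedDeriv n (genFun x) z
      = MvPolynomial.aeval ![x, Complex.tanh z] (prefactor n : MvPolynomial (Fin 2) ℝ)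
        * genFun x z := by
  induction n generalizing z with
  | zero => simp [prefactor]
  | succ n ih =>
    have hcosh : Complex.cosh z ≠ 0 := Complex.cosh_ne_zero_of_norm_lt (mem_ball_zero_iff.mp hz)
    have hev : iteratedDeriv n (genFun x)
        =ᶠ[nhds z] fun w => MvPolynomial.aeval ![x, Complex.tanh w] (prefactor n) * genFun x w :=
      Filter.eventuallyEq_of_mem (Metric.isOpen_ball.mem_nhds hz) fun w hw => ih hw
    rw [iteratedDeriv_succ, hev.deriv_eq]
    refine ((hasDerivAt_aeval_comp_snd x _ (Complex.hasDerivAt_tanh hcosh)).mul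
      (hasDerivAt_genFun x hcosh)).deriv.trans ?_
    simp only [prefactor, derivOp, map_add, map_mul, map_sub, map_one, map_pow,
      MvPolynomial.aeval_X, Matrix.cons_val_one, Matrix.cons_val_fin_one, Matrix.cons_val_zero]
    ring

theorem hasSum_genFun (x : ℂ) {z : ℂ} (hz : z ∈ Metric.ball 0 (Real.pi / 2)) :
    HasSum (fun n => Polynomial.aeval x (shefferP n) * z ^ n / n.factorial) (genFun x z) := by
  have hdiff : DifferentiableOn ℂ (genFun x) (Metric.ball 0 (Real.pi / 2)) := fun w hw =>
    (hasDerivAt_genFun x (Complex.cosh_ne_zero_of_norm_lt (mem_ball_zero_iff.mp hw)))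
      |>.differentiableAt.differentiableWithinAt
  refine (Complex.hasSum_taylorSeries_on_ball hdiff hz).congr_fun fun n => ?_
  rw [iteratedDeriv_genFun x n (Metric.mem_ball_self (by positivity)), ← evalSndZero_prefactor,
    aeval_evalSndZero]
  simp only [sub_zero, Complex.tanh_zero, genFun, mul_zero, Complex.exp_zero, Complex.cosh_zero,
    div_one, mul_one, smul_eq_mul]
  ring

noncomputable def closedForm (t x : ℝ) : ℝ := Real.exp (x * Real.tanh t) / Real.cosh t

theorem genFun_ofReal (x t : ℝ) : genFun x t = closedForm t x := by
  simp [genFun, closedForm]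

theorem shefferG_eq_closedForm {t : ℝ} (x : ℝ) (ht : |t| < Real.pi / 2) :
    shefferG t x = closedForm t x := by
  have hz : (t : ℂ) ∈ Metric.ball 0 (Real.pi / 2) := by simpa using ht
  refine (Complex.hasSum_ofReal.mp ?_).tsum_eq
  rw [← genFun_ofReal]
  refine (hasSum_genFun x hz).congr_fun fun n => ?_
  push_cast
  congr 2
  exact (Polynomial.aeval_algebraMap_apply_eq_algebraMap_eval x _).symm

theorem hasDerivAt_closedForm_fst (t x : ℝ) :
    HasDerivAt (fun s => closedForm s x)
      ((x * (1 - Real.tanh t ^ 2) - Real.tanh t) * closedForm t x) t := by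
  have hcosh : Complex.cosh t ≠ 0 := by exact_mod_cast (Real.cosh_pos t).ne'
  have h := (hasDerivAt_genFun x hcosh).real_of_complex
  simpa [genFun_ofReal, ← Complex.ofReal_tanh, sq] using h

theorem hasDerivAt_closedForm_snd (t x : ℝ) :
    HasDerivAt (closedForm t) (Real.tanh t * closedForm t x) x := by
  refine (((hasDerivAt_id x).mul_const (Real.tanh t)).exp.div_const (Real.cosh t)).congr_deriv ?_
  simp only [closedForm, id]
  ring

theorem closedForm_pde (t x : ℝ) :
    deriv (fun s => closedForm s x) t
      = x * closedForm t x - deriv (closedForm t) x - x * deriv (deriv (closedForm t)) x := by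
  have hx : deriv (closedForm t) = fun y => Real.tanh t * closedForm t y :=
    funext fun y => (hasDerivAt_closedForm_snd t y).deriv
  rw [(hasDerivAt_closedForm_fst t x).deriv, hx,
    ((hasDerivAt_closedForm_snd t x).const_mul (Real.tanh t)).deriv]
  ring

end Sheffer

/-- G satisfies the PDE ∂ₜG = xG - ∂ₓG - x ∂ₓₓG and equals exp(x tanh t)/cosh t
for |t| < π/2. -/
theorem shefferG_pde_closed_form (t x : ℝ) (ht : |t| < Real.pi / 2) :
    (deriv (fun s => shefferG s x) t
        = x * shefferG t x - deriv (fun y => shefferG t y) x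
          - x * deriv (fun y => deriv (fun z => shefferG t z) y) x) ∧
    shefferG t x = Real.exp (x * Real.tanh t) / Real.cosh t := by
  have hG : shefferG t = Sheffer.closedForm t :=
    funext fun y => Sheffer.shefferG_eq_closedForm y ht
  have hGt : (fun s => shefferG s x) =ᶠ[nhds t] fun s => Sheffer.closedForm s x :=
    Filter.eventually_of_mem ((isOpen_lt continuous_abs continuous_const).mem_nhds ht)
      fun s hs => Sheffer.shefferG_eq_closedForm x hs
  refine ⟨?_, Sheffer.shefferG_eq_closedForm x ht⟩
  rw [hGt.deriv_eq, hG]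
  exact Sheffer.closedForm_pde t x
end

section
/- For every n ≥ 1, the constant coefficient a(2n, 0) of the polynomial P_{2n} equals the Euler number E_{2n}, where Euler numbers are defined by the expansion 1/cosh(t) = Σ_{n≥0} E_n t^n/n!. -/
/-!
Differentiating `sech = (cosh)⁻¹` repeatedly, with `tanh' = 1 - tanh²` and `sech' = -tanh · sech`,
gives `sech⁽ⁿ⁾ = Qₙ(tanh) · sech` for polynomials `Qₙ` with `Qₙ₊₁ = (1 - X²) Qₙ' - X Qₙ`.
The coefficient recurrences of `Qₙ` and `Pₙ` match after the rescaling
`[Xᵏ] Qₙ = (-1)ⁿ k! [Xᵏ] Pₙ`, so `E₂ₙ = Q₂ₙ(0) = P₂ₙ(0)`.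
-/

open Polynomial

/-- The Euler numbers, defined by 1/cosh t = Σₙ Eₙ tⁿ/n!, i.e. Eₙ is the n-th derivative
of sech at 0. -/
noncomputable def eulerNumber (n : ℕ) : ℝ :=
  iteratedDeriv n (fun t : ℝ => (Real.cosh t)⁻¹) 0

namespace Real

theorem hasDerivAt_tanh (x : ℝ) : HasDerivAt tanh (1 - tanh x ^ 2) x := by
  rw [show tanh = fun t => sinh t / cosh t from funext tanh_eq_sinh_div_cosh]
  refine ((hasDerivAt_sinh x).div (hasDerivAt_cosh x) (cosh_pos x).ne').congr_deriv ?_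
  field_simp

theorem hasDerivAt_inv_cosh (x : ℝ) :
    HasDerivAt (fun t => (cosh t)⁻¹) (-tanh x * (cosh x)⁻¹) x := by
  refine ((hasDerivAt_cosh x).inv (cosh_pos x).ne').congr_deriv ?_
  rw [tanh_eq_sinh_div_cosh]
  ring

end Real

noncomputable def sechDerivPoly : ℕ → ℝ[X]
  | 0 => 1
  | n + 1 => (1 - X ^ 2) * derivative (sechDerivPoly n) - X * sechDerivPoly n

theorem hasDerivAt_eval_tanh_mul_inv_cosh (q : ℝ[X]) (x : ℝ) :
    HasDerivAt (fun t => q.eval (Real.tanh t) * (Real.cosh t)⁻¹)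
      (((1 - X ^ 2) * derivative q - X * q).eval (Real.tanh x) * (Real.cosh x)⁻¹) x := by
  refine (((q.hasDerivAt _).comp x (Real.hasDerivAt_tanh x)).mul
    (Real.hasDerivAt_inv_cosh x)).congr_deriv ?_
  simp only [eval_sub, eval_mul, eval_one, eval_pow, eval_X, Function.comp_apply]
  ring

theorem iteratedDeriv_inv_cosh (n : ℕ) :
    iteratedDeriv n (fun t => (Real.cosh t)⁻¹)
      = fun t => (sechDerivPoly n).eval (Real.tanh t) * (Real.cosh t)⁻¹ := by
  induction n with
  | zero => simp [sechDerivPoly]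
  | succ n ih =>
    rw [iteratedDeriv_succ, ih]
    exact funext fun t => (hasDerivAt_eval_tanh_mul_inv_cosh _ t).deriv

theorem eulerNumber_eq_eval_zero_sechDerivPoly (n : ℕ) : eulerNumber n = (sechDerivPoly n).eval 0 := by
  simp [eulerNumber, iteratedDeriv_inv_cosh]

theorem coeff_sechDerivPoly (n k : ℕ) :
    (sechDerivPoly n).coeff k = (-1) ^ n * k.factorial * (shefferP n).coeff k := by
  induction n generalizing k with
  | zero => rcases k with _ | k <;> simp [sechDerivPoly, shefferP, coeff_one]
  | succ n ih =>
    have hQ : sechDerivPoly (n + 1)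
        = derivative (sechDerivPoly n) - X * (X * derivative (sechDerivPoly n))
          - X * sechDerivPoly n := by
      rw [sechDerivPoly]; ring
    rw [hQ, shefferP]
    rcases k with _ | _ | k <;>
      simp only [coeff_sub, coeff_derivative, coeff_X_mul, coeff_X_mul_zero, ih,
        Nat.factorial] <;> push_cast <;> ring

theorem shefferP_constant_coeff_eq_eulerNumber_general (n : ℕ) :
    (shefferP (2 * n)).coeff 0 = eulerNumber (2 * n) := by
  rw [eulerNumber_eq_eval_zero_sechDerivPoly, ← coeff_zero_eq_eval_zero, coeff_sechDerivPoly,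
    (even_two_mul n).neg_one_pow]
  simp

/-- The constant coefficient of P_{2n} is the Euler number E_{2n}. -/
theorem shefferP_constant_coeff_eq_eulerNumber (n : ℕ) (hn : 1 ≤ n) :
    (shefferP (2 * n)).coeff 0 = eulerNumber (2 * n) :=
  shefferP_constant_coeff_eq_eulerNumber_general n
end

section
/- The family {P_n} is not an orthogonal polynomial sequence with respect to any measure: there exist no real sequences (c_n), (d_n) such that P_{n+1}(x) = (x − c_n) P_n(x) − d_n P_{n−1}(x) holds for all n ≥ 1. -/
open Polynomial

lemma shefferP_two : shefferP 2 = X ^ 2 - 1 := by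
  simp [shefferP]
  ring

lemma shefferP_three : shefferP 3 = X ^ 3 - 5 * X := by
  simp only [show (3 : ℕ) = 2 + 1 from rfl, shefferP, shefferP_two]
  simp
  ring

lemma shefferP_four : shefferP 4 = X ^ 4 - 14 * X ^ 2 + 5 := by
  simp only [show (4 : ℕ) = 3 + 1 from rfl, shefferP, shefferP_three]
  simp
  ring

/-- The family {Pₙ} satisfies no three-term recurrence P_{n+1} = (x - cₙ)Pₙ - dₙ P_{n-1},
hence (by Favard's theorem) is not an orthogonal polynomial sequence. -/
theorem shefferP_no_three_term_recurrence :
    ¬ ∃ c d : ℕ → ℝ, ∀ n : ℕ, 1 ≤ n →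
      shefferP (n + 1) = (X - C (c n)) * shefferP n - C (d n) * shefferP (n - 1) := by
  rintro ⟨c, d, h⟩
  have h3 := h 3 (by norm_num)
  rw [shefferP_four, shefferP_three, shefferP_two] at h3
  have e1 := congrArg (eval 1) h3
  have e2 := congrArg (eval (-1)) h3
  simp [eval_mul, eval_sub, eval_add, eval_pow] at e1 e2
  nlinarith [e1, e2]
end
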